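/- arXiv:2512.14338 — 3 statements merged into one kernel-verified Lean document; each statement's English description precedes it below -/
import Mathlib

section
/- For any integer m with 0 ≤ m ≤ n, let θ = F(β) with β = (2, 2, 1 − 2m). Then for every x ∈ {0,1}ⁿ, the condition E(x^{(j)}; θ) − E(x; θ) ≥ 1 holds for all j ∈ {1,…,n} if and only if ‖x‖₀ = m. -/
/-! Since `β₁ = β₂`, the weights of `F(2, 2, c)` do not see the edge structure: `W = 2(J - I)`, so
for binary `x` the energy depends only on `S = ‖x‖₀`, namely `E = S² - S + cS`. Flipping `x_j`
changes `S` by `δ = 1 - 2x_j = ±1`, and with `c = 1 - 2m` the gap is `2δ(S - m) + 1`. Hence all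
gaps are `≥ 1` iff `S ≥ m` (if some `x_j = 0`) and `S ≤ m` (if some `x_j = 1`); when `x` is
constant, `m ≤ n` settles the remaining case. -/

open scoped BigOperators
open scoped Classical
open Matrix MeasureTheory

namespace HopfieldPaper

/-- The space of (not necessarily admissible) Hopfield parameters `θ = (W, b)`. -/
abbrev Param (n : ℕ) := Matrix (Fin n) (Fin n) ℝ × (Fin n → ℝ)

variable {n : ℕ}

/-- `θ = (W, b)` is a Hopfield parameter: `W` is symmetric with zero diagonal. -/
def IsHopfieldParam (θ : Param n) : Prop :=
  θ.1.IsSymm ∧ ∀ i, θ.1 i i = 0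

/-- `x ∈ {0,1}ⁿ`. -/
def IsBinary (x : Fin n → ℝ) : Prop := ∀ i, x i = 0 ∨ x i = 1

/-- Energy `E(x; θ) = (1/2)·xᵀWx + bᵀx`. -/
noncomputable def energy (x : Fin n → ℝ) (θ : Param n) : ℝ :=
  (1 / 2) * (∑ i, ∑ j, x i * θ.1 i j * x j) + ∑ j, θ.2 j * x j

/-- `x^{(j)}`: the vector differing from `x` exactly in coordinate `j`. -/
noncomputable def flip (x : Fin n → ℝ) (j : Fin n) : Fin n → ℝ :=
  Function.update x j (1 - x j)

/-- The inner product on parameter space.  Under the identification of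
`θ = (W, b)` with `ω = (√2·a, b) ∈ ℝ^q` (`a` the strictly upper-triangular
entries of `W`), the Euclidean inner product on `ℝ^q` corresponds to
`⟨θ, η⟩ = Σᵢⱼ Wᵢⱼ·W'ᵢⱼ + Σⱼ bⱼ·b'ⱼ`; in particular `‖ω‖² = ‖W‖_F² + ‖b‖²`. -/
noncomputable def pInner (θ η : Param n) : ℝ :=
  (∑ i, ∑ j, θ.1 i j * η.1 i j) + ∑ j, θ.2 j * η.2 j

/-- The norm on parameter space: `‖ω‖ = √(‖W‖_F² + ‖b‖²)`. -/
noncomputable def pNorm (θ : Param n) : ℝ := Real.sqrt (pInner θ θ)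

/-- The representer `u_j(x)`: the unique element of parameter space with
`⟨u_j(x), θ⟩ = E(x^{(j)}; θ) − E(x; θ)` for every Hopfield parameter `θ`. -/
noncomputable def uvec (x : Fin n → ℝ) (j : Fin n) : Param n :=
  (Matrix.of fun i l =>
      if i = j ∧ l ≠ j then (1 - 2 * x j) * x l / 2
      else if l = j ∧ i ≠ j then (1 - 2 * x j) * x i / 2
      else 0,
   fun l => if l = j then 1 - 2 * x j else 0)

/-- `‖x‖₀`: the number of nonzero coordinates. -/
noncomputable def l0norm (x : Fin n → ℝ) : ℕ :=
  (Finset.univ.filter fun i => x i ≠ 0).card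

variable {v : ℕ}

/-- The type of unordered pairs of distinct elements of `Fin v`
(the "unordered pairs of `{1,…,v}`"). -/
abbrev EdgeIdx (v : ℕ) := {p : Sym2 (Fin v) // ¬ p.IsDiag}

/-- The permutation of `Sym2 (Fin v)` induced by a vertex permutation. -/
def sym2Perm (φ : Equiv.Perm (Fin v)) : Equiv.Perm (Sym2 (Fin v)) where
  toFun := Sym2.map φ
  invFun := Sym2.map φ.symm
  left_inv := fun p => by rw [Sym2.map_map]; simp
  right_inv := fun p => by rw [Sym2.map_map]; simp

/-- The induced permutation of unordered pairs of distinct vertices. -/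
def offDiagPerm (φ : Equiv.Perm (Fin v)) : Equiv.Perm (EdgeIdx v) :=
  (sym2Perm φ).subtypePerm (fun p => by
    simp only [sym2Perm, Equiv.coe_fn_mk]
    exact (Sym2.isDiag_map φ.injective).not)

/-- The edge permutation `π_φ` of `{1,…,n}` induced by the vertex permutation
`φ`; it satisfies `π_φ(Ind({a,b})) = Ind({φ(a),φ(b)})`. -/
def edgePerm (Ind : EdgeIdx v ≃ Fin n) (φ : Equiv.Perm (Fin v)) :
    Equiv.Perm (Fin n) :=
  Ind.permCongr (offDiagPerm φ)

/-- `Φ_n`: the set of permutation matrices of vertex-induced edge permutations. -/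
noncomputable def PhiSet (Ind : EdgeIdx v ≃ Fin n) :
    Set (Matrix (Fin n) (Fin n) ℝ) :=
  {P | ∃ φ : Equiv.Perm (Fin v), P = (edgePerm Ind φ).permMatrix ℝ}

/-- The two-element vertex set `Ind⁻¹(j)` of an edge index, as a `Finset`. -/
noncomputable def pairFinset (Ind : EdgeIdx v ≃ Fin n) (j : Fin n) : Finset (Fin v) :=
  Finset.univ.filter (fun a => a ∈ (Ind.symm j : Sym2 (Fin v)))

/-- Edge adjacency: `j ∼ l` iff `|Ind⁻¹(j) ∩ Ind⁻¹(l)| = 1`. -/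
noncomputable def edgeAdj (Ind : EdgeIdx v ≃ Fin n) (j l : Fin n) : Prop :=
  (pairFinset Ind j ∩ pairFinset Ind l).card = 1

/-- A permutation of edge indices preserves edge adjacency. -/
noncomputable def PreservesEdgeAdj (Ind : EdgeIdx v ≃ Fin n)
    (π : Equiv.Perm (Fin n)) : Prop :=
  ∀ j l : Fin n, edgeAdj Ind (π j) (π l) ↔ edgeAdj Ind j l

/-- `Q_n`: the set of permutation matrices of edge-adjacency-preserving
permutations. -/
noncomputable def QSet (Ind : EdgeIdx v ≃ Fin n) :
    Set (Matrix (Fin n) (Fin n) ℝ) :=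
  {Q | ∃ π : Equiv.Perm (Fin n), PreservesEdgeAdj Ind π ∧ Q = π.permMatrix ℝ}

/-- Orbit of a vector under a set of matrices: `Orb(x, Γ) = {P·x : P ∈ Γ}`. -/
noncomputable def morb (Γ : Set (Matrix (Fin n) (Fin n) ℝ)) (x : Fin n → ℝ) :
    Set (Fin n → ℝ) :=
  {y | ∃ P ∈ Γ, y = P.mulVec x}

/-- The linear map `F : ℝ³ → Θ` sending `β` to `(W, b)` with `W_{ij} = 0` if
`i = j`, `W_{ij} = β₁` if `i ∼ j`, `W_{ij} = β₂` if `i ≠ j` and `i ≁ j`, and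
`b_j = β₃`. -/
noncomputable def Fmap (Ind : EdgeIdx v ≃ Fin n) (β : ℝ × ℝ × ℝ) : Param n :=
  (Matrix.of fun i j =>
      if i = j then 0 else if edgeAdj Ind i j then β.1 else β.2.1,
   fun _ => β.2.2)

lemma IsBinary.mul_self {x : Fin n → ℝ} (hx : IsBinary x) (i : Fin n) : x i * x i = x i := by
  rcases hx i with h | h <;> simp [h]

lemma IsBinary.flip {x : Fin n → ℝ} (hx : IsBinary x) (j : Fin n) : IsBinary (flip x j) := by
  intro i
  rcases eq_or_ne i j with rfl | hij
  · rcases hx i with h | h <;> simp [HopfieldPaper.flip, h]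
  · simpa [HopfieldPaper.flip, hij] using hx i

lemma IsBinary.sum_eq_l0norm {x : Fin n → ℝ} (hx : IsBinary x) : ∑ i, x i = l0norm x := by
  have hxi : ∀ i, x i = if x i ≠ 0 then 1 else 0 := fun i => by rcases hx i with h | h <;> simp [h]
  rw [Finset.sum_congr rfl fun i _ => hxi i, Finset.sum_boole, l0norm]

lemma IsBinary.exists_eq_one_of_l0norm_pos {x : Fin n → ℝ} (hx : IsBinary x)
    (hpos : 0 < l0norm x) : ∃ j, x j = 1 := by
  obtain ⟨j, hj⟩ := Finset.card_pos.mp hpos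
  exact ⟨j, (hx j).resolve_left (Finset.mem_filter.mp hj).2⟩

lemma exists_eq_zero_of_l0norm_lt {x : Fin n → ℝ} (hlt : l0norm x < n) : ∃ j, x j = 0 := by
  by_contra! hne
  rw [l0norm, Finset.filter_true_of_mem fun i _ => hne i, Finset.card_univ,
    Fintype.card_fin] at hlt
  exact hlt.false

lemma sum_flip (x : Fin n → ℝ) (j : Fin n) :
    ∑ i, flip x j i = ∑ i, x i + (1 - 2 * x j) := by
  rw [flip, Finset.sum_update_of_mem (Finset.mem_univ j),
    ← Finset.sum_erase_add _ _ (Finset.mem_univ j), Finset.sdiff_singleton_eq_erase]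
  ring

lemma energy_Fmap_uniform (Ind : EdgeIdx v ≃ Fin n) (a c : ℝ) (x : Fin n → ℝ) :
    energy x (Fmap Ind (a, a, c)) =
      a / 2 * ((∑ i, x i) ^ 2 - ∑ i, x i * x i) + c * ∑ i, x i := by
  have hterm : ∀ i j, x i * (Fmap Ind (a, a, c)).1 i j * x j =
      a * (x i * x j) - if i = j then a * (x i * x j) else 0 := fun i j => by
    by_cases hij : i = j <;> simp [Fmap, hij]; ring
  have hquad : ∑ i, ∑ j, x i * (Fmap Ind (a, a, c)).1 i j * x j =
      a * ((∑ i, x i) ^ 2 - ∑ i, x i * x i) := by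
    simp only [hterm, Finset.sum_sub_distrib, Finset.sum_ite_eq, Finset.mem_univ, if_true,
      ← Finset.mul_sum, sq, Finset.sum_mul_sum, mul_sub]
  rw [energy, hquad]
  simp only [Fmap, ← Finset.mul_sum]
  ring

lemma energy_flip_sub_energy_Fmap {x : Fin n → ℝ} (hx : IsBinary x) (Ind : EdgeIdx v ≃ Fin n)
    (m : ℝ) (j : Fin n) :
    energy (flip x j) (Fmap Ind (2, 2, 1 - 2 * m)) - energy x (Fmap Ind (2, 2, 1 - 2 * m)) =
      2 * (1 - 2 * x j) * (l0norm x - m) + 1 := by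
  simp only [energy_Fmap_uniform, Finset.sum_congr rfl fun i _ => (hx.flip j).mul_self i,
    Finset.sum_congr rfl fun i _ => hx.mul_self i, sum_flip, hx.sum_eq_l0norm]
  linear_combination 4 * hx.mul_self j

theorem Fmap_memorizes_iff_sparsity_general {v n : ℕ}
    (Ind : EdgeIdx v ≃ Fin n) (m : ℕ) (hm : m ≤ n) (x : Fin n → ℝ)
    (hx : IsBinary x) :
    (∀ j : Fin n,
        energy (flip x j) (Fmap Ind (2, 2, 1 - 2 * (m : ℝ)))
          - energy x (Fmap Ind (2, 2, 1 - 2 * (m : ℝ))) ≥ 1) ↔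
    l0norm x = m := by
  simp only [energy_flip_sub_energy_Fmap hx, ge_iff_le, le_add_iff_nonneg_left]
  refine ⟨fun hgap => le_antisymm ?_ ?_, fun h j => by simp [h]⟩
  · by_contra! hlt
    obtain ⟨j, hj⟩ := hx.exists_eq_one_of_l0norm_pos (by omega)
    have hj_gap := hgap j
    rw [hj] at hj_gap
    exact hlt.not_ge (by exact_mod_cast (by linarith : (l0norm x : ℝ) ≤ m))
  · by_contra! hlt
    obtain ⟨j, hj⟩ := exists_eq_zero_of_l0norm_lt (hlt.trans_le hm)
    have hj_gap := hgap j
    rw [hj] at hj_gap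
    exact hlt.not_ge (by exact_mod_cast (by linarith : (m : ℝ) ≤ l0norm x))

/-- With `θ = F(2, 2, 1 − 2m)`, a binary `x` has all energy
gaps at least 1 iff `‖x‖₀ = m`. -/
theorem Fmap_memorizes_iff_sparsity {v n : ℕ} (hv : 2 ≤ v)
    (Ind : EdgeIdx v ≃ Fin n) (m : ℕ) (hm : m ≤ n) (x : Fin n → ℝ)
    (hx : IsBinary x) :
    (∀ j : Fin n,
        energy (flip x j) (Fmap Ind (2, 2, 1 - 2 * (m : ℝ)))
          - energy x (Fmap Ind (2, 2, 1 - 2 * (m : ℝ))) ≥ 1) ↔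
    l0norm x = m :=
  Fmap_memorizes_iff_sparsity_general Ind m hm x hx

end HopfieldPaper
end

section
/- Let β ∈ ℝ³ and θ = F(β). For any k with 2 ≤ k ≤ v, any edge representation x ∈ C_{v,k} of a k-clique with clique vertex set Clique(x), and any j ∈ {1,…,n}, let r = |Clique(x) ∩ Ind⁻¹(j)| ∈ {0,1,2}. Then the energy difference E(x^{(j)}; θ) − E(x; θ) equals: β₂·k(k−1)/2 + β₃ if r = 0; β₁·(k−1) + β₂·(k(k−1)/2 − (k−1)) + β₃ if r = 1; and −(2β₁·(k−2) + β₂·(k(k−1)/2 − 2k + 3) + β₃) if r = 2. -/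
open scoped BigOperators
open scoped Classical
open Matrix MeasureTheory

namespace HopfieldPaper

variable {n : ℕ}

variable {v : ℕ}

/-- The edge representation of the clique graph on the vertex set `K`. -/
noncomputable def cliqueRep (Ind : EdgeIdx v ≃ Fin n) (K : Finset (Fin v)) :
    Fin n → ℝ :=
  fun j => if (∀ a ∈ (Ind.symm j : Sym2 (Fin v)), a ∈ K) then 1 else 0

/-- `C_{v,k}`: edge representations of `k`-clique graphs on `v` vertices. -/
noncomputable def CliqueReps (Ind : EdgeIdx v ≃ Fin n) (k : ℕ) :
    Set (Fin n → ℝ) :=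
  {x | ∃ K : Finset (Fin v), K.card = k ∧ x = cliqueRep Ind K}

/-!
Flipping coordinate `j` changes the energy of a Hopfield parameter by
`(1 - 2 x_j) ((W x)_j + b_j)`. For `θ = F(β)` and `x` the clique on `K`, the sum `(W x)_j` runs over
the edges `e ⊆ K`: those meeting `p = Ind⁻¹(j)` in one vertex contribute `β₁`, those disjoint from
`p` contribute `β₂`, and `e = p` contributes `0`. With `r = |K ∩ p|` there are `r (k - r)` edges of
the first kind and `C(k - r, 2)` of the second, and `x_j = 1` exactly when `r = 2`.
-/

open Finset

lemma add_choose_two (a b : ℕ) : (a + b).choose 2 = a.choose 2 + a * b + b.choose 2 := by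
  rw [Nat.add_choose_eq, Nat.sum_antidiagonal_succ, Nat.sum_antidiagonal_succ,
    Nat.antidiagonal_zero, sum_singleton]
  simp only [zero_add, Nat.choose_zero_right, Nat.choose_one_right]
  ring

section Counting

variable {α : Type*} [DecidableEq α] (K p : Finset α)

lemma card_inter_eq_card_right_iff_subset {s t : Finset α} : #(s ∩ t) = #t ↔ t ⊆ s := by
  rw [← inter_eq_right]
  exact ⟨fun h => eq_of_subset_of_card_le inter_subset_right h.ge, fun h => by rw [h]⟩

lemma filter_card_inter_eq_zero_powersetCard (m : ℕ) :
    {e ∈ K.powersetCard m | #(p ∩ e) = 0} = (K \ p).powersetCard m := by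
  ext e
  simp only [mem_filter, mem_powersetCard, card_eq_zero, subset_sdiff,
    ← disjoint_iff_inter_eq_empty, disjoint_comm (a := p)]
  tauto

lemma filter_card_inter_eq_self_powersetCard (m : ℕ) :
    {e ∈ K.powersetCard m | #(p ∩ e) = m} = (K ∩ p).powersetCard m := by
  ext e
  simp only [mem_filter, mem_powersetCard, subset_inter_iff]
  constructor
  · rintro ⟨⟨hK, rfl⟩, h⟩
    exact ⟨⟨hK, card_inter_eq_card_right_iff_subset.mp h⟩, rfl⟩
  · rintro ⟨⟨hK, hp⟩, rfl⟩
    exact ⟨⟨hK, rfl⟩, card_inter_eq_card_right_iff_subset.mpr hp⟩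

theorem card_filter_card_inter_eq_one_powersetCard_two :
    #{e ∈ K.powersetCard 2 | #(p ∩ e) = 1} = #(K ∩ p) * #(K \ p) := by
  have hsplit : #(K.powersetCard 2) = #{e ∈ K.powersetCard 2 | #(p ∩ e) = 0}
      + #{e ∈ K.powersetCard 2 | #(p ∩ e) = 1} + #{e ∈ K.powersetCard 2 | #(p ∩ e) = 2} := by
    simp only [card_filter, card_eq_sum_ones (K.powersetCard 2), ← sum_add_distrib]
    refine sum_congr rfl fun e he => ?_
    have : #(p ∩ e) ≤ 2 := (mem_powersetCard.mp he).2 ▸ card_le_card inter_subset_right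
    interval_cases #(p ∩ e) <;> rfl
  rw [filter_card_inter_eq_zero_powersetCard, filter_card_inter_eq_self_powersetCard,
    card_powersetCard, card_powersetCard, card_powersetCard, ← card_sdiff_add_card_inter K p,
    add_choose_two] at hsplit
  linarith

end Counting

lemma energy_eq_dotProduct (x : Fin n → ℝ) (θ : Param n) :
    energy x θ = (1 / 2) * (x ⬝ᵥ (θ.1 *ᵥ x)) + θ.2 ⬝ᵥ x := by
  simp only [energy, dotProduct, mulVec, Finset.mul_sum, mul_assoc]

lemma flip_eq_add_single (x : Fin n → ℝ) (j : Fin n) :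
    flip x j = x + Pi.single j (1 - 2 * x j) := by
  ext i
  rcases eq_or_ne i j with rfl | h
  · simp only [flip, Function.update_self, Pi.add_apply, Pi.single_eq_same]; ring
  · simp [flip, h]

theorem energy_flip_sub_energy {θ : Param n} (hθ : IsHopfieldParam θ)
    (x : Fin n → ℝ) (j : Fin n) :
    energy (flip x j) θ - energy x θ = (1 - 2 * x j) * ((θ.1 *ᵥ x) j + θ.2 j) := by
  obtain ⟨hsymm, hdiag⟩ := hθ
  set d := 1 - 2 * x j
  have hcross : x ⬝ᵥ (θ.1 *ᵥ Pi.single j d) = d * (θ.1 *ᵥ x) j := by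
    rw [dotProduct_mulVec, ← mulVec_transpose, hsymm.eq, dotProduct_single, mul_comm]
  have hsq : Pi.single j d ⬝ᵥ (θ.1 *ᵥ Pi.single j d) = 0 := by
    rw [single_dotProduct, mulVec_single]
    simp [hdiag]
  rw [energy_eq_dotProduct, energy_eq_dotProduct, flip_eq_add_single, mulVec_add,
    dotProduct_add, add_dotProduct, add_dotProduct, hcross, hsq, single_dotProduct,
    dotProduct_add, dotProduct_single]
  ring

section Edges

variable (Ind : EdgeIdx v ≃ Fin n)

lemma mem_pairFinset {l : Fin n} {a : Fin v} :
    a ∈ pairFinset Ind l ↔ a ∈ (Ind.symm l : Sym2 (Fin v)) := by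
  simp [pairFinset]

lemma card_pairFinset (l : Fin n) : #(pairFinset Ind l) = 2 := by
  have h : pairFinset Ind l = (Ind.symm l : Sym2 (Fin v)).toFinset := by
    ext a
    rw [mem_pairFinset, Sym2.mem_toFinset]
  rw [h, Sym2.card_toFinset_of_not_isDiag _ (Ind.symm l).2]

lemma pairFinset_injective : Function.Injective (pairFinset Ind) := fun l l' h =>
  Ind.symm.injective <| Subtype.ext <| Sym2.ext fun a => by
    rw [← mem_pairFinset, ← mem_pairFinset, h]

lemma exists_pairFinset_eq {e : Finset (Fin v)} (he : #e = 2) : ∃ l, pairFinset Ind l = e := by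
  obtain ⟨a, b, hab, rfl⟩ := Finset.card_eq_two.mp he
  refine ⟨Ind ⟨s(a, b), by simpa using hab⟩, ?_⟩
  ext c
  simp [mem_pairFinset]

lemma sum_pairFinset {M : Type*} [AddCommMonoid M] (f : Finset (Fin v) → M) :
    ∑ l, f (pairFinset Ind l) = ∑ e ∈ univ.powersetCard 2, f e :=
  Finset.sum_nbij (pairFinset Ind)
    (fun l _ => mem_powersetCard.mpr ⟨subset_univ _, card_pairFinset Ind l⟩)
    (pairFinset_injective Ind).injOn
    (fun e he => by
      obtain ⟨l, hl⟩ := exists_pairFinset_eq Ind (mem_powersetCard.mp he).2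
      exact ⟨l, mem_coe.mpr (mem_univ l), hl⟩)
    (fun _ _ => rfl)

lemma card_pairFinset_inter_eq_two_iff {j l : Fin n} :
    #(pairFinset Ind j ∩ pairFinset Ind l) = 2 ↔ j = l := by
  refine ⟨fun h => pairFinset_injective Ind ?_, fun h => by rw [h, inter_self, card_pairFinset]⟩
  have hj : pairFinset Ind j ∩ pairFinset Ind l = pairFinset Ind j :=
    eq_of_subset_of_card_le inter_subset_left (by rw [h, card_pairFinset])
  have hl : pairFinset Ind j ∩ pairFinset Ind l = pairFinset Ind l :=
    eq_of_subset_of_card_le inter_subset_right (by rw [h, card_pairFinset])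
  exact hj.symm.trans hl

lemma edgeAdj_comm {j l : Fin n} : edgeAdj Ind j l ↔ edgeAdj Ind l j := by
  rw [edgeAdj, edgeAdj, inter_comm]

lemma isHopfieldParam_Fmap (β : ℝ × ℝ × ℝ) : IsHopfieldParam (Fmap Ind β) := by
  refine ⟨Matrix.IsSymm.ext fun i j => ?_, fun i => if_pos rfl⟩
  simp only [Fmap, of_apply, eq_comm (a := i), edgeAdj_comm Ind (j := i)]

lemma cliqueRep_apply (K : Finset (Fin v)) (l : Fin n) :
    cliqueRep Ind K l = if pairFinset Ind l ⊆ K then 1 else 0 := by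
  simp only [cliqueRep, subset_iff, mem_pairFinset]

end Edges

section Fmap

variable (Ind : EdgeIdx v ≃ Fin n) (β : ℝ × ℝ × ℝ)

lemma Fmap_fst_apply (j l : Fin n) :
    (Fmap Ind β).1 j l =
      (if #(pairFinset Ind j ∩ pairFinset Ind l) = 1 then β.1 else 0) +
        (if #(pairFinset Ind j ∩ pairFinset Ind l) = 0 then β.2.1 else 0) := by
  have hle : #(pairFinset Ind j ∩ pairFinset Ind l) ≤ 2 :=
    card_pairFinset Ind j ▸ card_le_card inter_subset_left
  simp only [Fmap, of_apply, edgeAdj, ← card_pairFinset_inter_eq_two_iff Ind]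
  obtain h | h | h : #(pairFinset Ind j ∩ pairFinset Ind l) = 0 ∨
      #(pairFinset Ind j ∩ pairFinset Ind l) = 1 ∨ #(pairFinset Ind j ∩ pairFinset Ind l) = 2 := by
    omega
  all_goals simp [h]

lemma powersetCard_univ_filter_subset {α : Type*} [Fintype α] [DecidableEq α]
    (K : Finset α) (m : ℕ) : {e ∈ (univ : Finset α).powersetCard m | e ⊆ K} = K.powersetCard m := by
  ext e
  simp [mem_powersetCard, and_comm]

theorem Fmap_mulVec_cliqueRep (K : Finset (Fin v)) (j : Fin n) :
    ((Fmap Ind β).1 *ᵥ cliqueRep Ind K) j =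
      β.1 * (#(K ∩ pairFinset Ind j) * #(K \ pairFinset Ind j) : ℕ) +
        β.2.1 * (#(K \ pairFinset Ind j)).choose 2 := by
  set p := pairFinset Ind j
  set w : Finset (Fin v) → ℝ := fun e =>
    (if #(p ∩ e) = 1 then β.1 else 0) + (if #(p ∩ e) = 0 then β.2.1 else 0)
  calc ((Fmap Ind β).1 *ᵥ cliqueRep Ind K) j
      = ∑ l, if pairFinset Ind l ⊆ K then w (pairFinset Ind l) else 0 := by
        simp only [mulVec, dotProduct, cliqueRep_apply, mul_ite, mul_one, mul_zero, Fmap_fst_apply,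
          w, p]
    _ = ∑ e ∈ K.powersetCard 2, w e := by
        rw [← powersetCard_univ_filter_subset, sum_filter]
        exact sum_pairFinset Ind (fun e => if e ⊆ K then w e else 0)
    _ = β.1 * #{e ∈ K.powersetCard 2 | #(p ∩ e) = 1} +
          β.2.1 * #{e ∈ K.powersetCard 2 | #(p ∩ e) = 0} := by
        rw [sum_add_distrib, ← sum_filter, ← sum_filter, sum_const, sum_const, nsmul_eq_mul,
          nsmul_eq_mul, mul_comm, mul_comm (#_ : ℝ)]
    _ = _ := by
      rw [card_filter_card_inter_eq_one_powersetCard_two, filter_card_inter_eq_zero_powersetCard,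
        card_powersetCard]

end Fmap

theorem Fmap_clique_energy_diff_general {v n : ℕ}
    (Ind : EdgeIdx v ≃ Fin n) (β : ℝ × ℝ × ℝ) (k : ℕ)
    (K : Finset (Fin v)) (hK : K.card = k) (x : Fin n → ℝ)
    (hx : x = cliqueRep Ind K) (j : Fin n) (r : ℕ)
    (hr : r = (K ∩ pairFinset Ind j).card) :
    (r = 0 →
      energy (flip x j) (Fmap Ind β) - energy x (Fmap Ind β)
        = β.2.1 * ((k : ℝ) * ((k : ℝ) - 1) / 2) + β.2.2) ∧
    (r = 1 →
      energy (flip x j) (Fmap Ind β) - energy x (Fmap Ind β)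
        = β.1 * ((k : ℝ) - 1)
          + β.2.1 * ((k : ℝ) * ((k : ℝ) - 1) / 2 - ((k : ℝ) - 1)) + β.2.2) ∧
    (r = 2 →
      energy (flip x j) (Fmap Ind β) - energy x (Fmap Ind β)
        = -(2 * β.1 * ((k : ℝ) - 2)
            + β.2.1 * ((k : ℝ) * ((k : ℝ) - 1) / 2 - 2 * (k : ℝ) + 3)
            + β.2.2)) := by
  subst hx hK
  set p := pairFinset Ind j
  have hk : (#K : ℝ) = r + #(K \ p) := by
    rw [hr, ← card_sdiff_add_card_inter K p]; push_cast; ring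
  have hxj : cliqueRep Ind K j = if r = 2 then 1 else 0 := by
    rw [cliqueRep_apply]
    refine if_congr ?_ rfl rfl
    rw [hr, ← card_inter_eq_card_right_iff_subset, (card_pairFinset Ind j : #p = 2)]
  rw [energy_flip_sub_energy (isHopfieldParam_Fmap Ind β), Fmap_mulVec_cliqueRep, hxj, ← hr, hk,
    Nat.cast_choose_two]
  refine ⟨fun h => ?_, fun h => ?_, fun h => ?_⟩ <;> simp only [h, Fmap] <;> push_cast <;> ring

/-- Explicit energy differences of `θ = F(β)` at a `k`-clique
representation, according to `r = |Clique(x) ∩ Ind⁻¹(j)|`. -/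
theorem Fmap_clique_energy_diff {v n : ℕ} (hv : 2 ≤ v)
    (Ind : EdgeIdx v ≃ Fin n) (β : ℝ × ℝ × ℝ) (k : ℕ) (hk2 : 2 ≤ k)
    (hkv : k ≤ v) (K : Finset (Fin v)) (hK : K.card = k) (x : Fin n → ℝ)
    (hx : x = cliqueRep Ind K) (j : Fin n) (r : ℕ)
    (hr : r = (K ∩ pairFinset Ind j).card) :
    (r = 0 →
      energy (flip x j) (Fmap Ind β) - energy x (Fmap Ind β)
        = β.2.1 * ((k : ℝ) * ((k : ℝ) - 1) / 2) + β.2.2) ∧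
    (r = 1 →
      energy (flip x j) (Fmap Ind β) - energy x (Fmap Ind β)
        = β.1 * ((k : ℝ) - 1)
          + β.2.1 * ((k : ℝ) * ((k : ℝ) - 1) / 2 - ((k : ℝ) - 1)) + β.2.2) ∧
    (r = 2 →
      energy (flip x j) (Fmap Ind β) - energy x (Fmap Ind β)
        = -(2 * β.1 * ((k : ℝ) - 2)
            + β.2.1 * ((k : ℝ) * ((k : ℝ) - 1) / 2 - 2 * (k : ℝ) + 3)
            + β.2.2)) :=
  Fmap_clique_energy_diff_general Ind β k K hK x hx j r hr

end HopfieldPaper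
end

section
/- Let Γ be a finite subgroup of the group of n×n permutation matrices, let x₀ ∈ {0,1}ⁿ, and let O = Orb(x₀, Γ); assume |O| = |Γ|. Suppose μ_O = (1/|O|)·Σ_{x ∈ O} ū(x) ≠ 0, so that ω* = AHSVM(O) is well defined, and let θ* be the Hopfield parameter corresponding to ω*. Then θ* is Γ-invariant: θ* ∈ Ψ(Γ). -/
open scoped BigOperators
open scoped Classical
open Matrix MeasureTheory

namespace HopfieldPaper

variable {n : ℕ}

/-- The averaged representer `ū(x) = (1/n)·Σ_{j=1}^n u_j(x)`. -/
noncomputable def ubar (x : Fin n → ℝ) : Param n :=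
  (n : ℝ)⁻¹ • ∑ j, uvec x j

/-- Action of a permutation matrix `Q` on parameters: `Qθ := (QᵀWQ, Qᵀb)`. -/
noncomputable def permAct (σ : Equiv.Perm (Fin n)) (θ : Param n) : Param n :=
  ((σ.permMatrix ℝ)ᵀ * θ.1 * σ.permMatrix ℝ, ((σ.permMatrix ℝ)ᵀ).mulVec θ.2)

/-- `θ ∈ Ψ(Γ)`: `θ` is invariant under (the permutation matrices of) `Γ`. -/
noncomputable def InvariantUnder (Γ : Set (Equiv.Perm (Fin n))) (θ : Param n) : Prop :=
  ∀ σ ∈ Γ, permAct σ θ = θ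

/-- `Orb(x, Γ) = {Q·x : Q ∈ Γ}` (`Q` the permutation matrix of `σ ∈ Γ`). -/
noncomputable def orb (Γ : Set (Equiv.Perm (Fin n))) (x : Fin n → ℝ) :
    Set (Fin n → ℝ) :=
  {y | ∃ σ ∈ Γ, y = ((σ.permMatrix ℝ)).mulVec x}

/-- The averaged-HSVM constraint `(1/|O|)·Σ_{x∈O} ⟨ū(x), ω⟩ ≥ 1` for a
finite set `O`. -/
noncomputable def AvgConstraint (O : Set (Fin n → ℝ)) (ω : Param n) : Prop :=
  1 ≤ (O.ncard : ℝ)⁻¹ * ∑ᶠ x ∈ O, pInner (ubar x) ω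

/-!
Each `σ ∈ Γ` permutes the orbit, and on parameters it acts by an isometry of `pInner` that
preserves the Hopfield conditions and sends `ū(x)` to `ū(x ∘ σ⁻¹)`. Hence `σ` maps the feasible set
of the AHSVM problem onto itself and `ω*` to a feasible point of the same norm. The feasible set is
convex and the norm (Euclidean after flattening) is strictly convex, so the minimizer is unique and
`σ ω* = ω*`.
-/

open scoped InnerProductSpace

lemma _root_.IsMinOn.eq_of_norm_comp_le {F E : Type*} [AddCommGroup F] [Module ℝ F]
    [NormedAddCommGroup E] [NormedSpace ℝ E] [StrictConvexSpace ℝ E] {f : F →ₗ[ℝ] E}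
    (hf : Function.Injective f) {S : Set F} (hS : Convex ℝ S) {a b : F}
    (hmin : IsMinOn (fun x => ‖f x‖) S a) (ha : a ∈ S) (hb : b ∈ S) (hba : ‖f b‖ ≤ ‖f a‖) :
    b = a := by
  by_contra hne
  have hmid : (1 / 2 : ℝ) • (a + b) ∈ S := by
    simpa [smul_add] using hS ha hb (by norm_num : (0 : ℝ) ≤ 1 / 2) (by norm_num) (by norm_num)
  have hlt : ‖(1 / 2 : ℝ) • (f a + f b)‖ < ‖f a‖ :=
    (norm_midpoint_lt_iff (le_antisymm (hmin hb) hba)).2 (hf.ne (Ne.symm hne))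
  have hle : ‖f a‖ ≤ ‖f ((1 / 2 : ℝ) • (a + b))‖ := hmin hmid
  rw [map_smul, map_add] at hle
  exact hle.not_gt hlt

def Param.toEuclidean : Param n →ₗ[ℝ] EuclideanSpace ℝ ((Fin n × Fin n) ⊕ Fin n) where
  toFun θ := WithLp.toLp 2 (Sum.elim (fun p => θ.1 p.1 p.2) θ.2)
  map_add' _ _ := by ext (_ | _) <;> rfl
  map_smul' _ _ := by ext (_ | _) <;> rfl

lemma Param.toEuclidean_injective : Function.Injective (Param.toEuclidean (n := n)) := by
  intro a b h
  refine Prod.ext (Matrix.ext fun i j => ?_) (funext fun j => ?_)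
  · exact congrArg (· (Sum.inl (i, j))) h
  · exact congrArg (· (Sum.inr j)) h

lemma pInner_eq_inner (a b : Param n) :
    pInner a b = ⟪Param.toEuclidean a, Param.toEuclidean b⟫_ℝ := by
  simp [pInner, Param.toEuclidean, PiLp.inner_apply, Fintype.sum_sum_type,
    Fintype.sum_prod_type, mul_comm]

lemma pInner_self_le_pInner_self_iff (a b : Param n) :
    pInner a a ≤ pInner b b ↔ ‖Param.toEuclidean a‖ ≤ ‖Param.toEuclidean b‖ := by
  simp only [pInner_eq_inner, real_inner_self_eq_norm_sq]
  exact sq_le_sq₀ (norm_nonneg _) (norm_nonneg _)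

lemma convex_isHopfieldParam : Convex ℝ {θ : Param n | IsHopfieldParam θ} := by
  intro a ha b hb s t _ _ _
  exact ⟨(ha.1.smul s).add (hb.1.smul t), fun i => by simp [ha.2 i, hb.2 i]⟩

lemma convex_avgConstraint {O : Set (Fin n → ℝ)} (hO : O.Finite) :
    Convex ℝ {ω : Param n | AvgConstraint O ω} := by
  refine convex_halfSpace_ge ⟨fun a b => ?_, fun c a => ?_⟩ 1
  · simp only [pInner_eq_inner, map_add, inner_add_right, finsum_mem_add_distrib hO, mul_add]
  · simp only [pInner_eq_inner, map_smul, inner_smul_right, ← mul_finsum_mem, smul_eq_mul]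
    ring

section Permutation

variable (σ : Equiv.Perm (Fin n))

lemma permAct_fst_apply (θ : Param n) (i j : Fin n) :
    (permAct σ θ).1 i j = θ.1 (σ⁻¹ i) (σ⁻¹ j) := by
  simp [permAct, PEquiv.toMatrix_toPEquiv_mul, PEquiv.mul_toMatrix_toPEquiv, Equiv.Perm.inv_def]

lemma permAct_snd (θ : Param n) : (permAct σ θ).2 = θ.2 ∘ ⇑σ⁻¹ := by
  simp [permAct, permMatrix_mulVec]

lemma permAct_inv_permAct (θ : Param n) : permAct σ⁻¹ (permAct σ θ) = θ := by
  ext i j <;> simp [permAct_fst_apply, permAct_snd]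

lemma pInner_permAct (a b : Param n) : pInner (permAct σ a) (permAct σ b) = pInner a b := by
  simp only [pInner, permAct_fst_apply, permAct_snd, Function.comp_apply]
  congr 1
  · exact Fintype.sum_equiv σ⁻¹ _ _ fun i => Fintype.sum_equiv σ⁻¹ _ _ fun j => rfl
  · exact Fintype.sum_equiv σ⁻¹ _ _ fun j => rfl

lemma IsHopfieldParam.permAct {θ : Param n} (hθ : IsHopfieldParam θ) :
    IsHopfieldParam (permAct σ θ) :=
  ⟨Matrix.IsSymm.ext fun i j => by simp [permAct_fst_apply, hθ.1.apply],
    fun i => by simp [permAct_fst_apply, hθ.2]⟩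

noncomputable def permActₗ : Param n →ₗ[ℝ] Param n where
  toFun := permAct σ
  map_add' a b := by ext i j <;> simp [permAct_fst_apply, permAct_snd]
  map_smul' c a := by ext i j <;> simp [permAct_fst_apply, permAct_snd]

lemma permAct_uvec (x : Fin n → ℝ) (j : Fin n) :
    permAct σ (uvec x j) = uvec (x ∘ ⇑σ⁻¹) (σ j) := by
  ext i l <;> simp [permAct_fst_apply, permAct_snd, uvec, Equiv.symm_apply_eq]

lemma permAct_ubar (x : Fin n → ℝ) : permAct σ (ubar x) = ubar (x ∘ ⇑σ⁻¹) := by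
  change permActₗ σ _ = _
  rw [ubar, ubar, map_smul, map_sum]
  simp only [permActₗ, LinearMap.coe_mk, AddHom.coe_mk, permAct_uvec]
  rw [Equiv.sum_comp σ (uvec (x ∘ ⇑σ⁻¹))]

end Permutation

lemma orb_finite (Γ : Set (Equiv.Perm (Fin n))) (x : Fin n → ℝ) : (orb Γ x).Finite :=
  (Set.finite_range fun σ : Equiv.Perm (Fin n) => x ∘ σ).subset <| by
    rintro _ ⟨σ, -, rfl⟩
    exact ⟨σ, (permMatrix_mulVec σ).symm⟩

section Orbit

variable {Γ : Subgroup (Equiv.Perm (Fin n))} {x y : Fin n → ℝ} {σ : Equiv.Perm (Fin n)}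

lemma comp_mem_orb (hσ : σ ∈ Γ) (hy : y ∈ orb (Γ : Set (Equiv.Perm (Fin n))) x) :
    y ∘ σ ∈ orb (Γ : Set (Equiv.Perm (Fin n))) x := by
  obtain ⟨τ, hτ, rfl⟩ := hy
  exact ⟨τ * σ, mul_mem hτ hσ, by simp [← mulVec_mulVec, permMatrix_mulVec, Function.comp_assoc]⟩

lemma bijOn_comp_orb (hσ : σ ∈ Γ) :
    Set.BijOn (· ∘ σ) (orb (Γ : Set (Equiv.Perm (Fin n))) x)
      (orb (Γ : Set (Equiv.Perm (Fin n))) x) :=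
  ⟨fun _ hy => comp_mem_orb hσ hy, σ.surjective.injective_comp_right.injOn,
    fun y hy => ⟨y ∘ ⇑σ⁻¹, comp_mem_orb (inv_mem hσ) hy, by ext; simp⟩⟩

lemma avgConstraint_orb_permAct_iff (hσ : σ ∈ Γ) {ω : Param n} :
    AvgConstraint (orb (Γ : Set (Equiv.Perm (Fin n))) x) (permAct σ ω) ↔
      AvgConstraint (orb (Γ : Set (Equiv.Perm (Fin n))) x) ω := by
  have hsum : ∑ᶠ y ∈ orb (Γ : Set (Equiv.Perm (Fin n))) x, pInner (ubar y) (permAct σ ω) =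
      ∑ᶠ y ∈ orb (Γ : Set (Equiv.Perm (Fin n))) x, pInner (ubar y) ω := by
    refine finsum_mem_eq_of_bijOn (· ∘ σ) (bijOn_comp_orb hσ) fun y _ => ?_
    rw [← pInner_permAct σ⁻¹, permAct_inv_permAct, permAct_ubar, inv_inv]
  rw [AvgConstraint, AvgConstraint, hsum]

end Orbit

theorem ahsvm_orbit_invariant_general {n : ℕ} (Γ : Subgroup (Equiv.Perm (Fin n)))
    (x₀ : Fin n → ℝ)
    (ωstar : Param n) (hvalid : IsHopfieldParam ωstar)
    (hfeas : AvgConstraint (orb (Γ : Set (Equiv.Perm (Fin n))) x₀) ωstar)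
    (hmin : ∀ ω : Param n, IsHopfieldParam ω →
      AvgConstraint (orb (Γ : Set (Equiv.Perm (Fin n))) x₀) ω →
      pInner ωstar ωstar ≤ pInner ω ω) :
    InvariantUnder (Γ : Set (Equiv.Perm (Fin n))) ωstar := by
  set S := {ω : Param n | IsHopfieldParam ω} ∩
    {ω | AvgConstraint (orb (Γ : Set (Equiv.Perm (Fin n))) x₀) ω}
  have hS : Convex ℝ S := convex_isHopfieldParam.inter (convex_avgConstraint (orb_finite _ _))
  have hminS : IsMinOn (fun ω => ‖Param.toEuclidean ω‖) S ωstar := isMinOn_iff.2 fun ω hω =>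
    (pInner_self_le_pInner_self_iff _ _).1 (hmin ω hω.1 hω.2)
  intro σ hσ
  refine hminS.eq_of_norm_comp_le Param.toEuclidean_injective hS ⟨hvalid, hfeas⟩
    ⟨hvalid.permAct σ, (avgConstraint_orb_permAct_iff hσ).2 hfeas⟩ ?_
  exact (pInner_self_le_pInner_self_iff _ _).1 (pInner_permAct σ ωstar ωstar).le

/-- The AHSVM solution over a full orbit `O = Orb(x₀, Γ)`
with `|O| = |Γ|` is Γ-invariant. -/
theorem ahsvm_orbit_invariant {n : ℕ} (Γ : Subgroup (Equiv.Perm (Fin n)))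
    (x₀ : Fin n → ℝ) (hx₀ : IsBinary x₀)
    (hcard : (orb (Γ : Set (Equiv.Perm (Fin n))) x₀).ncard = Nat.card Γ)
    (hμ : ((orb (Γ : Set (Equiv.Perm (Fin n))) x₀).ncard : ℝ)⁻¹ •
      (∑ᶠ x ∈ orb (Γ : Set (Equiv.Perm (Fin n))) x₀, ubar x) ≠ (0 : Param n))
    (ωstar : Param n) (hvalid : IsHopfieldParam ωstar)
    (hfeas : AvgConstraint (orb (Γ : Set (Equiv.Perm (Fin n))) x₀) ωstar)
    (hmin : ∀ ω : Param n, IsHopfieldParam ω →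
      AvgConstraint (orb (Γ : Set (Equiv.Perm (Fin n))) x₀) ω →
      pInner ωstar ωstar ≤ pInner ω ω) :
    InvariantUnder (Γ : Set (Equiv.Perm (Fin n))) ωstar :=
  ahsvm_orbit_invariant_general Γ x₀ ωstar hvalid hfeas hmin

end HopfieldPaper
end
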